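/- Let ‖·‖ be a norm on ℝ^n (equipped with the Euclidean inner product ⟨·,·⟩) with dual norm ‖y‖_* := sup{⟨y,s⟩ : ‖s‖ ≤ 1}. Let C ⊆ ℝ^n be a nonempty compact convex set with diameter D := max_{x,y∈C} ‖x - y‖, and let f : ℝ^n → ℝ be continuously differentiable, attaining its minimum over C at x* ∈ C with f* := f(x*), such that f is η-quasar-convex with respect to x* for some η ∈ (0,1], i.e., f(x*) - f(y) ≥ (1/η)·⟨∇f(y), x* - y⟩ for all y ∈ ℝ^n. Let G := max_{x∈C} ‖∇f(x)‖_*, let M > 0, and set Ĉ := max{M, 1, G}·(max{D, 1})². Assume f(x_0) > f*, and suppose sequences x : ℕ → ℝ^n, v : ℕ → ℝ^n, t : ℕ → ℝ, Λ : ℕ → ℝ satisfy, for every k ∈ ℕ: (i) x_k ∈ C and v_k minimizes u ↦ ⟨∇f(x_k), u⟩ over C; (ii) with d_k := v_k - x_k and Gap_k := ⟨∇f(x_k), x_k - v_k⟩, one has 0 < Λ_k ≤ M and t_k = min{ Gap_k/(Λ_k·‖d_k‖²), 1 } if d_k ≠ 0, and t_k = 0 if d_k = 0; (iii) x_{k+1}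 = x_k + t_k·d_k; (iv) f(x_{k+1}) ≤ f(x_k) + t_k·⟨∇f(x_k), d_k⟩ + (Λ_k/2)·t_k²·‖d_k‖². Then for every N ≥ 1, f(x_N) - f* ≤ 2·Ĉ / ( N·η² + 2·Ĉ/(f(x_0) - f*) ). -/
import Mathlib


open scoped RealInnerProductSpace

/-- The dual norm `ν*(y) = sup {⟨y, s⟩ : ν s ≤ 1}` of a norm `ν` on `ℝⁿ`. -/
noncomputable def dualNorm {n : ℕ} (ν : EuclideanSpace ℝ (Fin n) → ℝ)
    (y : EuclideanSpace ℝ (Fin n)) : ℝ :=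
  sSup {r : ℝ | ∃ s : EuclideanSpace ℝ (Fin n), ν s ≤ 1 ∧ r = ⟪y, s⟫}

section aux

variable {n : ℕ} {nrm : EuclideanSpace ℝ (Fin n) → ℝ}
  (hadd : ∀ u v, nrm (u + v) ≤ nrm u + nrm v)
  (hsmul : ∀ (a : ℝ) (u : EuclideanSpace ℝ (Fin n)), nrm (a • u) = |a| * nrm u)
  (heq0 : ∀ u, nrm u = 0 ↔ u = 0)

include hadd hsmul heq0

lemma nrm_zero : nrm 0 = 0 := (heq0 0).mpr rfl

lemma nrm_neg (u) : nrm (-u) = nrm u := by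
  have := hsmul (-1) u
  simpa using this

lemma nrm_nonneg (u) : 0 ≤ nrm u := by
  have h2 := hadd u (-u)
  rw [add_neg_cancel, nrm_zero hadd hsmul heq0, nrm_neg hadd hsmul heq0] at h2
  linarith

lemma nrm_lipschitz (u w : EuclideanSpace ℝ (Fin n)) : nrm u - nrm w ≤ nrm (u - w) := by
  have := hadd (u - w) w
  rw [sub_add_cancel] at this
  linarith

omit hadd hsmul heq0 in
lemma abs_coord_le_norm (w : EuclideanSpace ℝ (Fin n)) (i : Fin n) : |w i| ≤ ‖w‖ := by
  rw [EuclideanSpace.norm_eq]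
  have h1 : |w i| = Real.sqrt (‖w i‖ ^ 2) := by
    rw [Real.sqrt_sq_eq_abs]; simp
  rw [h1]
  apply Real.sqrt_le_sqrt
  exact Finset.single_le_sum (f := fun j => ‖w j‖ ^ 2) (fun j _ => by positivity) (Finset.mem_univ i)

lemma nrm_sum_le {ι : Type*} (s : Finset ι) (g : ι → EuclideanSpace ℝ (Fin n)) :
    nrm (∑ i ∈ s, g i) ≤ ∑ i ∈ s, nrm (g i) := by
  classical
  induction s using Finset.cons_induction with
  | empty => simp [nrm_zero hadd hsmul heq0]
  | cons i s hi ih =>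
    rw [Finset.sum_cons, Finset.sum_cons]
    exact le_trans (hadd _ _) (by linarith)

lemma nrm_continuous : Continuous nrm := by
  classical
  set K : ℝ := ∑ i : Fin n, nrm (EuclideanSpace.single i 1) with hK
  have hbound : ∀ w : EuclideanSpace ℝ (Fin n), nrm w ≤ K * ‖w‖ := by
    intro w
    have hw : w = ∑ i : Fin n, (w i) • EuclideanSpace.single i (1:ℝ) := by
      have := ((EuclideanSpace.basisFun (Fin n) ℝ).toBasis.sum_repr w).symm
      simpa [EuclideanSpace.basisFun_apply] using this
    calc nrm w ≤ ∑ i : Fin n, nrm ((w i) • EuclideanSpace.single i (1:ℝ)) := by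
          conv_lhs => rw [hw]
          exact nrm_sum_le hadd hsmul heq0 _ _
      _ = ∑ i : Fin n, |w i| * nrm (EuclideanSpace.single i 1) := by
          simp only [hsmul]
      _ ≤ ∑ i : Fin n, ‖w‖ * nrm (EuclideanSpace.single i 1) := by
          apply Finset.sum_le_sum
          intro i _
          exact mul_le_mul_of_nonneg_right (abs_coord_le_norm w i)
            (nrm_nonneg hadd hsmul heq0 _)
      _ = K * ‖w‖ := by rw [← Finset.mul_sum]; ring
  rw [Metric.continuous_iff]
  intro u ε hε
  have hK0 : 0 ≤ K := Finset.sum_nonneg fun i _ => nrm_nonneg hadd hsmul heq0 _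
  refine ⟨ε / (K + 1), by positivity, fun w hw => ?_⟩
  have h1 : nrm w - nrm u ≤ nrm (w - u) := nrm_lipschitz hadd hsmul heq0 _ _
  have h2 : nrm u - nrm w ≤ nrm (w - u) := by
    have := nrm_lipschitz hadd hsmul heq0 u w
    rw [show u - w = -(w - u) from (neg_sub w u).symm, nrm_neg hadd hsmul heq0] at this
    exact this
  have h3 : nrm (w - u) ≤ K * ‖w - u‖ := hbound _
  have h4 : ‖w - u‖ < ε / (K + 1) := by rwa [dist_eq_norm] at hw
  have h5 : K * ‖w - u‖ < ε := by
    calc K * ‖w - u‖ ≤ K * (ε / (K + 1)) :=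
          mul_le_mul_of_nonneg_left (le_of_lt h4) hK0
      _ < ε := by rw [div_eq_inv_mul]; rw [← mul_assoc];
                  have : K * (K+1)⁻¹ < 1 := by
                    rw [mul_inv_lt_iff₀ (by positivity)]; linarith
                  nlinarith
  rw [Real.dist_eq, abs_lt]
  constructor <;> linarith

lemma nrm_lower_bound : ∃ c > 0, ∀ u, c * ‖u‖ ≤ nrm u := by
  by_cases hsph : (Metric.sphere (0 : EuclideanSpace ℝ (Fin n)) 1).Nonempty
  · obtain ⟨u0, hu0, hu0min⟩ := (isCompact_sphere (0 : EuclideanSpace ℝ (Fin n)) 1).exists_isMinOn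
      hsph ((nrm_continuous hadd hsmul heq0).continuousOn)
    have hu0ne : u0 ≠ 0 := by
      intro h
      rw [h, Metric.mem_sphere, dist_self] at hu0
      norm_num at hu0
    have hc : 0 < nrm u0 := by
      rcases lt_or_eq_of_le (nrm_nonneg hadd hsmul heq0 u0) with h | h
      · exact h
      · exact absurd ((heq0 u0).mp h.symm) hu0ne
    refine ⟨nrm u0, hc, fun u => ?_⟩
    by_cases hu : u = 0
    · simp [hu, nrm_zero hadd hsmul heq0]
    · have hnu : 0 < ‖u‖ := norm_pos_iff.mpr hu
      have hmem : ‖u‖⁻¹ • u ∈ Metric.sphere (0 : EuclideanSpace ℝ (Fin n)) 1 := by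
        simp [norm_smul, abs_of_pos (inv_pos.mpr hnu), inv_mul_cancel₀ (ne_of_gt hnu)]
      have h5 : nrm u0 ≤ nrm (‖u‖⁻¹ • u) := hu0min hmem
      have heq : nrm (‖u‖⁻¹ • u) = ‖u‖⁻¹ * nrm u := by
        rw [hsmul]; rw [abs_of_pos (inv_pos.mpr hnu)]
      rw [heq] at h5
      calc nrm u0 * ‖u‖ ≤ (‖u‖⁻¹ * nrm u) * ‖u‖ :=
            mul_le_mul_of_nonneg_right h5 (le_of_lt hnu)
        _ = nrm u := by field_simp
  · refine ⟨1, one_pos, fun u => ?_⟩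
    have hu : u = 0 := by
      by_contra h
      have hnu : 0 < ‖u‖ := norm_pos_iff.mpr h
      exact hsph ⟨‖u‖⁻¹ • u, by
        simp [norm_smul, abs_of_pos (inv_pos.mpr hnu), inv_mul_cancel₀ (ne_of_gt hnu)]⟩
    simp [hu, nrm_zero hadd hsmul heq0]

lemma dualSet_bddAbove (y : EuclideanSpace ℝ (Fin n)) :
    BddAbove {r : ℝ | ∃ s : EuclideanSpace ℝ (Fin n), nrm s ≤ 1 ∧ r = ⟪y, s⟫} := by
  obtain ⟨c, hc, hlow⟩ := nrm_lower_bound hadd hsmul heq0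
  refine ⟨‖y‖ * (1 / c), ?_⟩
  rintro r ⟨s, hs, rfl⟩
  have h1 : ⟪y, s⟫ ≤ ‖y‖ * ‖s‖ := real_inner_le_norm y s
  have h2 : c * ‖s‖ ≤ 1 := le_trans (hlow s) hs
  have h3 : ‖s‖ ≤ 1 / c := by rw [le_div_iff₀ hc]; linarith
  calc ⟪y, s⟫ ≤ ‖y‖ * ‖s‖ := h1
    _ ≤ ‖y‖ * (1 / c) := mul_le_mul_of_nonneg_left h3 (norm_nonneg y)

lemma dualNorm_nonneg (y : EuclideanSpace ℝ (Fin n)) : 0 ≤ dualNorm nrm y := by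
  apply le_csSup (dualSet_bddAbove hadd hsmul heq0 y)
  exact ⟨0, by rw [nrm_zero hadd hsmul heq0]; norm_num, by simp⟩

lemma inner_le_dualNorm_mul (y z : EuclideanSpace ℝ (Fin n)) :
    ⟪y, z⟫ ≤ dualNorm nrm y * nrm z := by
  by_cases hz : z = 0
  · simp [hz, nrm_zero hadd hsmul heq0]
  · have hnz : 0 < nrm z := by
      rcases lt_or_eq_of_le (nrm_nonneg hadd hsmul heq0 z) with h | h
      · exact h
      · exact absurd ((heq0 z).mp h.symm) hz
    set s := (nrm z)⁻¹ • z with hs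
    have hns : nrm s = 1 := by
      rw [hs, hsmul, abs_of_pos (inv_pos.mpr hnz), inv_mul_cancel₀ (ne_of_gt hnz)]
    have hmem : ⟪y, s⟫ ∈ {r : ℝ | ∃ s : EuclideanSpace ℝ (Fin n), nrm s ≤ 1 ∧ r = ⟪y, s⟫} :=
      ⟨s, le_of_eq hns, rfl⟩
    have h1 : ⟪y, s⟫ ≤ dualNorm nrm y := le_csSup (dualSet_bddAbove hadd hsmul heq0 y) hmem
    have h2 : ⟪y, s⟫ = (nrm z)⁻¹ * ⟪y, z⟫ := by rw [hs, real_inner_smul_right]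
    rw [h2] at h1
    have := mul_le_mul_of_nonneg_right h1 (le_of_lt hnz)
    calc ⟪y, z⟫ = (nrm z)⁻¹ * ⟪y, z⟫ * nrm z := by field_simp
      _ ≤ dualNorm nrm y * nrm z := this

end aux

set_option maxHeartbeats 1000000 in
/-- Constrained quasar-convex convergence rate of Adaptive
Conditional Gradient Descent (Frank–Wolfe variant): with
`Ĉ = max{M,1,G}·(max{D,1})²`, for every `N ≥ 1`,
`f(x_N) - f* ≤ 2·Ĉ / (N·η² + 2·Ĉ/(f(x_0) - f*))`. -/
theorem acgd_constrained_quasar_rate {n : ℕ}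
    (nrm : EuclideanSpace ℝ (Fin n) → ℝ)
    (hnrm_add : ∀ u v, nrm (u + v) ≤ nrm u + nrm v)
    (hnrm_smul : ∀ (a : ℝ) (u : EuclideanSpace ℝ (Fin n)), nrm (a • u) = |a| * nrm u)
    (hnrm_eq0 : ∀ u, nrm u = 0 ↔ u = 0)
    (C : Set (EuclideanSpace ℝ (Fin n)))
    (hCne : C.Nonempty) (hCcomp : IsCompact C) (hCconv : Convex ℝ C)
    (D : ℝ) (hD : IsGreatest {r : ℝ | ∃ a ∈ C, ∃ b ∈ C, r = nrm (a - b)} D)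
    (f : EuclideanSpace ℝ (Fin n) → ℝ)
    (f' : EuclideanSpace ℝ (Fin n) → EuclideanSpace ℝ (Fin n))
    (hf : ∀ y, HasGradientAt f (f' y) y) (hf' : Continuous f')
    (xstar : EuclideanSpace ℝ (Fin n)) (hxstarC : xstar ∈ C)
    (hmin : ∀ y ∈ C, f xstar ≤ f y)
    (η : ℝ) (hη : η ∈ Set.Ioc (0 : ℝ) 1)
    (hquasar : ∀ y, f xstar - f y ≥ (1 / η) * ⟪f' y, xstar - y⟫)
    (G : ℝ) (hG : IsGreatest ((fun z => dualNorm nrm (f' z)) '' C) G)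
    (M : ℝ) (hM : 0 < M)
    (Chat : ℝ) (hChat : Chat = max M (max 1 G) * (max D 1) ^ 2)
    (x v : ℕ → EuclideanSpace ℝ (Fin n)) (t Λ : ℕ → ℝ)
    (h0 : f (x 0) > f xstar)
    (hxC : ∀ k, x k ∈ C) (hvC : ∀ k, v k ∈ C)
    (hlmo : ∀ k, ∀ u ∈ C, ⟪f' (x k), v k⟫ ≤ ⟪f' (x k), u⟫)
    (hΛ : ∀ k, 0 < Λ k ∧ Λ k ≤ M)
    (ht : ∀ k, v k - x k ≠ 0 →
      t k = min (⟪f' (x k), x k - v k⟫ / (Λ k * nrm (v k - x k) ^ 2)) 1)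
    (ht0 : ∀ k, v k - x k = 0 → t k = 0)
    (hx : ∀ k, x (k + 1) = x k + t k • (v k - x k))
    (hdec : ∀ k, f (x (k + 1)) ≤
      f (x k) + t k * ⟪f' (x k), v k - x k⟫ + Λ k / 2 * t k ^ 2 * nrm (v k - x k) ^ 2) :
    ∀ N : ℕ, 1 ≤ N →
      f (x N) - f xstar ≤
        2 * Chat / ((N : ℝ) * η ^ 2 + 2 * Chat / (f (x 0) - f xstar)) := by
  obtain ⟨hη0, hη1⟩ := hη
  have hD0 : 0 ≤ D := by
    obtain ⟨a, _, b, _, hab⟩ := hD.1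
    rw [hab]; exact nrm_nonneg hnrm_add hnrm_smul hnrm_eq0 _
  have hG0 : 0 ≤ G := by
    obtain ⟨z, _, hGz⟩ := hG.1
    rw [← hGz]; exact dualNorm_nonneg hnrm_add hnrm_smul hnrm_eq0 _
  have hmax1 : (1:ℝ) ≤ max M (max 1 G) := le_trans (le_max_left 1 G) (le_max_right M _)
  have hmax2 : (1:ℝ) ≤ max D 1 := le_max_right D 1
  have hChatpos : 0 < Chat := by rw [hChat]; nlinarith
  have hMD : M * D ^ 2 ≤ Chat := by
    have h1 : M ≤ max M (max 1 G) := le_max_left _ _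
    have h2 : D ≤ max D 1 := le_max_left D 1
    have h3 : D^2 ≤ (max D 1)^2 := by nlinarith
    rw [hChat]
    calc M * D^2 ≤ max M (max 1 G) * (max D 1)^2 :=
          mul_le_mul h1 h3 (by positivity) (by linarith)
      _ = _ := rfl
  have hGD : G * D ≤ Chat := by
    have h1 : G ≤ max M (max 1 G) := le_trans (le_max_right 1 G) (le_max_right M _)
    have h2 : D ≤ max D 1 := le_max_left D 1
    have h3 : D ≤ (max D 1)^2 := by nlinarith
    rw [hChat]
    calc G * D ≤ max M (max 1 G) * (max D 1)^2 :=
          mul_le_mul h1 h3 hD0 (by linarith)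
      _ = _ := rfl
  have hnrmD : ∀ a ∈ C, ∀ b ∈ C, nrm (a - b) ≤ D := fun a ha b hb => hD.2 ⟨a, ha, b, hb, rfl⟩
  have hpos : ∀ k, 0 ≤ f (x k) - f xstar := fun k => sub_nonneg.mpr (hmin _ (hxC k))
  have hqc : ∀ k, η * (f (x k) - f xstar) ≤ ⟪f' (x k), x k - xstar⟫ := by
    intro k
    have hq := hquasar (x k)
    rw [show xstar - x k = -(x k - xstar) from (neg_sub _ _).symm, inner_neg_right] at hq
    have h2 := mul_le_mul_of_nonneg_left hq (le_of_lt hη0)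
    have h3 : η * (1 / η * -⟪f' (x k), x k - xstar⟫) = -⟪f' (x k), x k - xstar⟫ := by
      rw [← mul_assoc, mul_one_div_cancel (ne_of_gt hη0), one_mul]
    rw [h3] at h2
    nlinarith
  have hbound : ∀ k, η * (f (x k) - f xstar) ≤ Chat := by
    intro k
    have h1 := hqc k
    have h2 : ⟪f' (x k), x k - xstar⟫ ≤ dualNorm nrm (f' (x k)) * nrm (x k - xstar) :=
      inner_le_dualNorm_mul hnrm_add hnrm_smul hnrm_eq0 _ _
    have h3 : dualNorm nrm (f' (x k)) ≤ G := hG.2 ⟨x k, hxC k, rfl⟩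
    have h4 : nrm (x k - xstar) ≤ D := hnrmD _ (hxC k) _ hxstarC
    have h5 : 0 ≤ dualNorm nrm (f' (x k)) := dualNorm_nonneg hnrm_add hnrm_smul hnrm_eq0 _
    have h6 : 0 ≤ nrm (x k - xstar) := nrm_nonneg hnrm_add hnrm_smul hnrm_eq0 _
    have h7 : dualNorm nrm (f' (x k)) * nrm (x k - xstar) ≤ G * D := by nlinarith
    linarith
  have hgap : ∀ k, η * (f (x k) - f xstar) ≤ ⟪f' (x k), x k - v k⟫ := by
    intro k
    have h1 := hlmo k xstar hxstarC
    have e1 : ⟪f' (x k), x k - v k⟫ = ⟪f' (x k), x k⟫ - ⟪f' (x k), v k⟫ :=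
      inner_sub_right _ _ _
    have e2 : ⟪f' (x k), x k - xstar⟫ = ⟪f' (x k), x k⟫ - ⟪f' (x k), xstar⟫ :=
      inner_sub_right _ _ _
    have := hqc k
    linarith
  have key : ∀ k, f (x (k+1)) - f xstar ≤
      (f (x k) - f xstar) - η^2/(2*Chat) * (f (x k) - f xstar)^2 := by
    intro k
    have hGapk := hgap k
    have hhk := hpos k
    have hbk := hbound k
    by_cases hd : v k - x k = 0
    · have hxk : x (k+1) = x k := by rw [hx k, ht0 k hd, zero_smul, add_zero]
      have hxv : x k - v k = 0 := by rw [← neg_sub, hd, neg_zero]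
      have hGap0 : ⟪f' (x k), x k - v k⟫ = 0 := by rw [hxv, inner_zero_right]
      have hh0 : f (x k) - f xstar = 0 := by nlinarith
      rw [hxk, hh0]; norm_num
    · have hnd : 0 < nrm (v k - x k) := by
        rcases lt_or_eq_of_le (nrm_nonneg hnrm_add hnrm_smul hnrm_eq0 (v k - x k)) with h | h
        · exact h
        · exact absurd ((hnrm_eq0 _).mp h.symm) hd
      have hρpos : 0 < Λ k * nrm (v k - x k)^2 := mul_pos (hΛ k).1 (by positivity)
      have hρC : Λ k * nrm (v k - x k)^2 ≤ Chat := by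
        have h1 : nrm (v k - x k) ≤ D := hnrmD _ (hvC k) _ (hxC k)
        have h2 := (hΛ k).2
        have h3 := (hΛ k).1
        have h4 : nrm (v k - x k)^2 ≤ D^2 := by nlinarith
        calc Λ k * nrm (v k - x k)^2 ≤ M * nrm (v k - x k)^2 :=
              mul_le_mul_of_nonneg_right h2 (by positivity)
          _ ≤ M * D^2 := mul_le_mul_of_nonneg_left h4 hM.le
          _ ≤ Chat := hMD
      have htk := ht k hd
      have hinner : ⟪f' (x k), v k - x k⟫ = -⟪f' (x k), x k - v k⟫ := by
        rw [show v k - x k = -(x k - v k) from (neg_sub _ _).symm, inner_neg_right]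
      have hdk := hdec k
      rw [hinner] at hdk
      have hGapnn : 0 ≤ ⟪f' (x k), x k - v k⟫ :=
        le_trans (mul_nonneg (le_of_lt hη0) hhk) hGapk
      rcases le_or_gt 1 (⟪f' (x k), x k - v k⟫ / (Λ k * nrm (v k - x k)^2)) with hcase | hcase
      · have ht1 : t k = 1 := by rw [htk, min_eq_right hcase]
        rw [ht1] at hdk
        have hρGap : Λ k * nrm (v k - x k)^2 ≤ ⟪f' (x k), x k - v k⟫ :=
          (one_le_div hρpos).mp hcase
        have hq1 : η^2 * (f (x k) - f xstar)^2 ≤ Chat * ⟪f' (x k), x k - v k⟫ := by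
          nlinarith [mul_le_mul hbk hGapk (mul_nonneg hη0.le hhk) hChatpos.le]
        have hq2 : η^2/(2*Chat) * (f (x k) - f xstar)^2 ≤ ⟪f' (x k), x k - v k⟫ / 2 := by
          rw [div_mul_eq_mul_div, div_le_div_iff₀ (by positivity) (by norm_num)]
          nlinarith
        nlinarith
      · have ht2 : t k = ⟪f' (x k), x k - v k⟫ / (Λ k * nrm (v k - x k)^2) := by
          rw [htk, min_eq_left (le_of_lt hcase)]
        rw [ht2] at hdk
        have hΛ0 : Λ k ≠ 0 := ne_of_gt (hΛ k).1
        have hnd0 : nrm (v k - x k) ≠ 0 := ne_of_gt hnd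
        have e : Λ k / 2 * (⟪f' (x k), x k - v k⟫ / (Λ k * nrm (v k - x k)^2))^2
              * nrm (v k - x k)^2
            = ⟪f' (x k), x k - v k⟫^2 / (2 * (Λ k * nrm (v k - x k)^2)) := by
          field_simp
        have e2 : ⟪f' (x k), x k - v k⟫ / (Λ k * nrm (v k - x k)^2)
              * -⟪f' (x k), x k - v k⟫
            = -(⟪f' (x k), x k - v k⟫^2 / (Λ k * nrm (v k - x k)^2)) := by
          field_simp
        rw [e, e2] at hdk
        have hq1 : η^2 * (f (x k) - f xstar)^2 ≤ ⟪f' (x k), x k - v k⟫^2 := by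
          nlinarith [mul_le_mul hGapk hGapk (mul_nonneg hη0.le hhk) hGapnn]
        have hq2 : η^2/(2*Chat) * (f (x k) - f xstar)^2
            ≤ ⟪f' (x k), x k - v k⟫^2 / (2 * (Λ k * nrm (v k - x k)^2)) := by
          calc η^2/(2*Chat) * (f (x k) - f xstar)^2
              = η^2 * (f (x k) - f xstar)^2 / (2*Chat) := by ring
            _ ≤ ⟪f' (x k), x k - v k⟫^2 / (2*Chat) :=
                (div_le_div_iff_of_pos_right (by positivity)).mpr hq1
            _ ≤ ⟪f' (x k), x k - v k⟫^2 / (2 * (Λ k * nrm (v k - x k)^2)) :=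
                div_le_div_of_nonneg_left (by positivity) (by positivity) (by linarith)
        have e3 : ⟪f' (x k), x k - v k⟫^2 / (Λ k * nrm (v k - x k)^2)
            = 2 * (⟪f' (x k), x k - v k⟫^2 / (2 * (Λ k * nrm (v k - x k)^2))) := by
          ring
        linarith
  -- induction
  have h0p : 0 < f (x 0) - f xstar := sub_pos.mpr h0
  have hapos : 0 < η^2/(2*Chat) := by positivity
  have hhalf : ∀ k, 2 * (η^2/(2*Chat)) * (f (x k) - f xstar) ≤ 1 := by
    intro k
    have h1 := hbound k
    have h2 := hpos k
    have h3 : η^2 * (f (x k) - f xstar) ≤ Chat := by nlinarith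
    have e : 2 * (η^2/(2*Chat)) * (f (x k) - f xstar)
        = η^2 * (f (x k) - f xstar) / Chat := by
      field_simp
    rw [e, div_le_one hChatpos]
    exact h3
  have main : ∀ N : ℕ,
      f (x N) - f xstar ≤ 1 / (1/(f (x 0) - f xstar) + N * (η^2/(2*Chat))) := by
    intro N
    induction N with
    | zero => simp [one_div_one_div]
    | succ N ih =>
      have hspos : 0 < 1/(f (x 0) - f xstar) + N * (η^2/(2*Chat)) := by positivity
      have hgoal_eq : 1/(f (x 0) - f xstar) + (↑(N+1):ℝ) * (η^2/(2*Chat))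
          = (1/(f (x 0) - f xstar) + N * (η^2/(2*Chat))) + η^2/(2*Chat) := by
        push_cast; ring
      rw [hgoal_eq]
      set s := 1/(f (x 0) - f xstar) + N * (η^2/(2*Chat)) with hs
      set a := η^2/(2*Chat) with hadef
      have hk := key N
      have hh := hpos N
      have hhb := hhalf N
      have hsl : 1/s ≤ f (x 0) - f xstar := by
        rw [div_le_iff₀ hspos]
        have h1 : (1:ℝ) = (f (x 0) - f xstar) * (1/(f (x 0) - f xstar)) := by field_simp
        have h2 : 1/(f (x 0) - f xstar) ≤ s := by
          rw [hs]; nlinarith [mul_nonneg (Nat.cast_nonneg (α := ℝ) N) hapos.le]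
        calc (1:ℝ) = (f (x 0) - f xstar) * (1/(f (x 0) - f xstar)) := h1
          _ ≤ (f (x 0) - f xstar) * s := mul_le_mul_of_nonneg_left h2 (le_of_lt h0p)
      have h2as : 2*a*(1/s) ≤ 1 := by
        have := hhalf 0
        have h1 : 2*a*(1/s) ≤ 2*a*(f (x 0) - f xstar) :=
          mul_le_mul_of_nonneg_left hsl (by positivity)
        linarith
      have step1 : (f (x N) - f xstar) - a*(f (x N) - f xstar)^2 ≤ 1/s - a*(1/s)^2 := by
        nlinarith [mul_nonneg (sub_nonneg.mpr ih)
          (show 0 ≤ 1 - a*(1/s) - a*(f (x N) - f xstar) by nlinarith)]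
      have step2 : 1/s - a*(1/s)^2 ≤ 1/(s + a) := by
        rw [le_div_iff₀ (by positivity)]
        have e : (1/s - a*(1/s)^2) * (s + a) = 1 - a^2/s^2 := by
          field_simp
          ring
        rw [e]
        have : 0 ≤ a^2/s^2 := by positivity
        linarith
      linarith
  intro N hN
  have hmain := main N
  have heq : 1/(1/(f (x 0) - f xstar) + N * (η^2/(2*Chat)))
      = 2*Chat/((N:ℝ)*η^2 + 2*Chat/(f (x 0) - f xstar)) := by
    rw [div_eq_div_iff]
    · field_simp
      ring
    · positivity
    · positivity
  rw [← heq]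
  exact hmain
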